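/- Every orientation-preserving diffeomorphism of ℝ^m is smoothly isotopic to the identity through diffeomorphisms: if h : ℝ^m → ℝ^m is a smooth bijection with smooth inverse whose differential at every point has positive determinant, then there is a smooth map H : [0,1] × ℝ^m → ℝ^m such that H(0,·) = h, H(1,·) = id, and H(t,·) is a diffeomorphism of ℝ^m for every t ∈ [0,1]. -/

import Mathlib

noncomputable section

/-- Euclidean `m`-space `ℝᵐ`. -/
abbrev Euc (m : ℕ) : Type := EuclideanSpace ℝ (Fin m)

/-- `f : ℝᵐ → ℝᵐ` is a diffeomorphism: a smooth (`C^∞`) bijection with smooth inverse. -/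
def IsDiffeo {m : ℕ} (f : Euc m → Euc m) : Prop :=
  Function.Bijective f ∧ ContDiff ℝ (⊤ : ℕ∞) f ∧ ContDiff ℝ (⊤ : ℕ∞) (Function.invFun f)

/-!
Alexander's trick: by Hadamard's lemma, `(h (s • x) - h 0) / s` extends smoothly to `s = 0`,
where it equals `A = Dh(0)`, and for every `s` it is a diffeomorphism. Running `s` from `1` to `0`
while shrinking the translation by `h 0` deforms `h` into the linear map `A`, and it remains to
compose with a smooth path of invertible maps from `1` to `A⁻¹`. Such a path exists because
`det A⁻¹ > 0`: by Gaussian elimination a matrix is a product of transvections and a diagonal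
matrix; transvections and positive diagonal matrices are joined to `1` by straight lines, and
a diagonal matrix flipping the signs of two coordinates is the square of a rotation by `π / 2`,
itself a product of three transvections.
-/

open Set Function
open scoped ContDiff Finset

universe u

section SmoothPath

variable {R : Type*} [NormedRing R] [NormedAlgebra ℝ R]

def SmoothlyJoinedToOne (a : R) : Prop :=
  ∃ γ : ℝ → R, ContDiff ℝ ∞ γ ∧ γ 0 = a ∧ γ 1 = 1 ∧ ∀ t ∈ Icc (0 : ℝ) 1, IsUnit (γ t)

theorem SmoothlyJoinedToOne.mul {a b : R} (ha : SmoothlyJoinedToOne a)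
    (hb : SmoothlyJoinedToOne b) : SmoothlyJoinedToOne (a * b) := by
  obtain ⟨γ, hγ, hγ0, hγ1, hγu⟩ := ha
  obtain ⟨δ, hδ, hδ0, hδ1, hδu⟩ := hb
  exact ⟨fun t => γ t * δ t, hγ.mul hδ, by simp [hγ0, hδ0], by simp [hγ1, hδ1],
    fun t ht => (hγu t ht).mul (hδu t ht)⟩

end SmoothPath

theorem exists_ne_neg_of_prod_pos {ι S : Type*} [Fintype ι] [CommRing S] [LinearOrder S]
    [IsStrictOrderedRing S] {d : ι → S} (hd : 0 < ∏ k, d k) {i : ι} (hi : d i < 0) :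
    ∃ j, j ≠ i ∧ d j < 0 := by
  classical
  by_contra! hpos
  have : ∏ k, d k ≤ 0 := by
    rw [← Finset.mul_prod_erase _ _ (Finset.mem_univ i)]
    exact mul_nonpos_of_nonpos_of_nonneg hi.le
      (Finset.prod_nonneg fun k hk => hpos k (Finset.ne_of_mem_erase hk))
  exact this.not_gt hd

namespace Matrix

variable {n : Type*} [Fintype n] [DecidableEq n]
variable {R : Type*} [NormedRing R] [NormedAlgebra ℝ R] (φ : Matrix n n ℝ →ₐ[ℝ] R)

theorem contDiff_algHom_comp_of_entries {γ : ℝ → Matrix n n ℝ}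
    (hγ : ∀ i j, ContDiff ℝ ∞ fun t => γ t i j) : ContDiff ℝ ∞ fun t => φ (γ t) := by
  have h : ∀ t, φ (γ t) = ∑ i, ∑ j, γ t i j • φ (single i j 1) := by
    intro t
    conv_lhs => rw [matrix_eq_sum_single (γ t)]
    simp [map_sum, ← map_smul, smul_single]
  simp only [h]
  exact ContDiff.sum fun i _ => ContDiff.sum fun j _ => (hγ i j).smul contDiff_const

theorem smoothlyJoinedToOne_algHom_of_path {γ : ℝ → Matrix n n ℝ}
    (hγ : ∀ i j, ContDiff ℝ ∞ fun t => γ t i j) (h1 : γ 1 = 1)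
    (hdet : ∀ t ∈ Icc (0 : ℝ) 1, (γ t).det ≠ 0) : SmoothlyJoinedToOne (φ (γ 0)) :=
  ⟨fun t => φ (γ t), contDiff_algHom_comp_of_entries φ hγ, rfl, by simp only [h1, map_one],
    fun t ht => ((isUnit_iff_isUnit_det _).2 (hdet t ht).isUnit).map φ⟩

theorem smoothlyJoinedToOne_algHom_transvection (i j : n) (hij : i ≠ j) (c : ℝ) :
    SmoothlyJoinedToOne (φ (transvection i j c)) := by
  have h := smoothlyJoinedToOne_algHom_of_path φ (γ := fun t => transvection i j ((1 - t) * c))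
    (fun k l => by
      simp only [transvection, add_apply, one_apply, single_apply]
      split_ifs <;> fun_prop)
    (by simp [transvection_zero])
    (fun t _ => by simp [det_transvection_of_ne i j hij])
  simpa using h

theorem smoothlyJoinedToOne_algHom_diagonal_of_pos {d : n → ℝ} (hd : ∀ i, 0 < d i) :
    SmoothlyJoinedToOne (φ (diagonal d)) := by
  have h := smoothlyJoinedToOne_algHom_of_path φ
    (γ := fun t => diagonal fun k => (1 - t) * d k + t)
    (fun k l => by
      simp only [diagonal_apply]
      split_ifs <;> fun_prop)
    (by simp)
    (fun t ht => by
      rw [det_diagonal]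
      refine (Finset.prod_pos fun k _ => ?_).ne'
      rcases ht.1.eq_or_lt with rfl | ht0
      · simpa using hd k
      · nlinarith [hd k, ht.2])
  simpa using h

def flipPair (i j : n) : n → ℝ := fun k => if k = i ∨ k = j then -1 else 1

theorem prod_flipPair {i j : n} (hij : i ≠ j) : ∏ k, flipPair i j k = 1 := by
  have hpair : ({k | k = i ∨ k = j} : Finset n) = {i, j} := by ext; simp
  simp [flipPair, Finset.prod_ite, hpair, Finset.card_pair hij]

theorem rotation_sq_eq_diagonal_flipPair {i j : n} (hij : i ≠ j) :
    (transvection i j (-1 : ℝ) * transvection j i 1 * transvection i j (-1)) ^ 2 =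
      diagonal (flipPair i j) := by
  -- the product of the three transvections is the rotation by `π / 2` in the `(i, j)`-plane
  have hrot : transvection i j (-1 : ℝ) * transvection j i 1 * transvection i j (-1) =
      1 - single i i 1 - single j j 1 + single j i 1 - single i j 1 := by
    simp [transvection, add_mul, mul_add, single_mul_single_same, single_mul_single_of_ne,
      hij.symm]
    simp only [← single_neg]
    abel
  rw [sq, hrot]
  simp [sub_mul, mul_sub, add_mul, mul_add, single_mul_single_same, single_mul_single_of_ne, hij,
    hij.symm]
  ext k l
  simp [diagonal, flipPair, single_apply, one_apply]
  split_ifs <;> grind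

theorem smoothlyJoinedToOne_algHom_diagonal_flipPair {i j : n} (hij : i ≠ j) :
    SmoothlyJoinedToOne (φ (diagonal (flipPair i j))) := by
  have hrot : SmoothlyJoinedToOne
      (φ (transvection i j (-1 : ℝ) * transvection j i 1 * transvection i j (-1))) := by
    simp only [map_mul]
    exact ((smoothlyJoinedToOne_algHom_transvection φ i j hij _).mul
      (smoothlyJoinedToOne_algHom_transvection φ j i hij.symm _)).mul
      (smoothlyJoinedToOne_algHom_transvection φ i j hij _)
  rw [← rotation_sq_eq_diagonal_flipPair hij, sq, map_mul]
  exact hrot.mul hrot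

theorem smoothlyJoinedToOne_algHom_diagonal {d : n → ℝ} (hd : 0 < ∏ k, d k) :
    SmoothlyJoinedToOne (φ (diagonal d)) := by
  induction hN : #{k | d k < 0} using Nat.strong_induction_on generalizing d with
  | _ N ih =>
  by_cases hneg : ∃ i, d i < 0
  · obtain ⟨i, hi⟩ := hneg
    obtain ⟨j, hji, hj⟩ := exists_ne_neg_of_prod_pos hd hi
    set d' : n → ℝ := fun k => flipPair i j k * d k
    have hsplit : diagonal d = diagonal (flipPair i j) * diagonal d' := by
      rw [diagonal_mul_diagonal]
      congr 1; funext k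
      simp only [d', flipPair]; split_ifs <;> ring
    have hprod : ∏ k, d' k = ∏ k, d k := by
      simp only [d', Finset.prod_mul_distrib, prod_flipPair hji.symm, one_mul]
    have hfewer : #{k | d' k < 0} < N := by
      refine hN ▸ Finset.card_lt_card
        ((Finset.ssubset_iff_of_subset ?_).2 ⟨i, by simpa using hi, ?_⟩)
      · intro k
        simp only [Finset.mem_filter, Finset.mem_univ, true_and]
        simp only [d', flipPair]
        split_ifs with hk <;> intro h
        · rcases hk with rfl | rfl <;> linarith
        · linarith
      · simp [d', flipPair]; linarith
    rw [hsplit, map_mul]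
    exact (smoothlyJoinedToOne_algHom_diagonal_flipPair φ hji.symm).mul
      (ih _ hfewer (hprod ▸ hd) rfl)
  · have hd0 : ∀ k, d k ≠ 0 := fun k hk => hd.ne' (Finset.prod_eq_zero (Finset.mem_univ k) hk)
    simp only [not_exists, not_lt] at hneg
    exact smoothlyJoinedToOne_algHom_diagonal_of_pos φ fun k => (hneg k).lt_of_ne' (hd0 k)

theorem smoothlyJoinedToOne_algHom_of_det_pos {M : Matrix n n ℝ} (hM : 0 < M.det) :
    SmoothlyJoinedToOne (φ M) := by
  refine diagonal_transvection_induction (fun N => SmoothlyJoinedToOne (φ N)) M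
    (fun D hD => smoothlyJoinedToOne_algHom_diagonal φ ?_)
    (fun t => smoothlyJoinedToOne_algHom_transvection φ t.i t.j t.hij t.c)
    (fun A B hA hB => by simpa only [map_mul] using hA.mul hB)
  rwa [← det_diagonal, hD]

end Matrix

namespace ContinuousLinearMap

theorem isUnit_iff_isUnit_det {𝕜 E : Type*} [NontriviallyNormedField 𝕜] [CompleteSpace 𝕜]
    [NormedAddCommGroup E] [NormedSpace 𝕜 E] [FiniteDimensional 𝕜 E] (L : E →L[𝕜] E) :
    IsUnit L ↔ IsUnit L.det := by
  rw [← LinearMap.isUnit_iff_isUnit_det,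
    ← isUnit_map_iff (Module.End.toContinuousLinearMap E).symm L]
  rfl

theorem smoothlyJoinedToOne_of_det_pos {E : Type*} [NormedAddCommGroup E] [NormedSpace ℝ E]
    [FiniteDimensional ℝ E] {L : E →L[ℝ] E} (hL : 0 < L.det) : SmoothlyJoinedToOne L := by
  let b := Module.finBasis ℝ E
  let φ := (LinearMap.toMatrixAlgEquiv b).symm.trans (Module.End.toContinuousLinearMap E)
  have hdet : 0 < (LinearMap.toMatrix b b L).det := by rwa [LinearMap.det_toMatrix]
  have h := Matrix.smoothlyJoinedToOne_algHom_of_det_pos φ.toAlgHom hdet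
  rwa [show φ.toAlgHom (LinearMap.toMatrix b b L) = L from φ.apply_symm_apply L] at h

end ContinuousLinearMap

section ParametricIntegral

variable {E : Type u} [NormedAddCommGroup E] [NormedSpace ℝ E]

theorem ContDiff.uncurry_fderiv_left {G : Type*} [NormedAddCommGroup G] [NormedSpace ℝ G]
    {F : E → ℝ → G} {n : WithTop ℕ∞} (hF : ContDiff ℝ (n + 1) (uncurry F)) :
    ContDiff ℝ n (uncurry fun x s => fderiv ℝ (fun y => F y s) x) :=
  ContDiff.fderiv (f := fun (p : E × ℝ) y => F y p.2)
    (hF.comp (contDiff_snd.prodMk (contDiff_snd.comp contDiff_fst))) contDiff_fst le_rfl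

variable [ProperSpace E]

theorem hasFDerivAt_intervalIntegral_of_contDiff {G : Type*} [NormedAddCommGroup G]
    [NormedSpace ℝ G] {F : E → ℝ → G} (hF : ContDiff ℝ 1 (uncurry F)) (a b : ℝ) (x₀ : E) :
    HasFDerivAt (fun x => ∫ s in a..b, F x s)
      (∫ s in a..b, fderiv ℝ (fun y => F y s) x₀) x₀ := by
  have hF' := (hF.uncurry_fderiv_left (n := 0)).continuous
  obtain ⟨C, hC⟩ := ((isCompact_closedBall x₀ 1).prod isCompact_uIcc).exists_bound_of_continuousOn
    hF'.continuousOn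
  refine intervalIntegral.hasFDerivAt_integral_of_dominated_of_fderiv_le
    (bound := fun _ => C) (Metric.ball_mem_nhds x₀ one_pos)
    (Filter.Eventually.of_forall fun x => (hF.continuous.uncurry_left x).aestronglyMeasurable)
    ((hF.continuous.uncurry_left x₀).intervalIntegrable _ _)
    (hF'.uncurry_left x₀).aestronglyMeasurable
    (Filter.Eventually.of_forall fun s hs x hx =>
      hC (x, s) ⟨Metric.ball_subset_closedBall hx, uIoc_subset_uIcc hs⟩)
    intervalIntegrable_const
    (Filter.Eventually.of_forall fun s _ x _ => ?_)
  exact ((hF.comp (contDiff_id.prodMk contDiff_const)).differentiable one_ne_zero x).hasFDerivAt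

theorem contDiff_intervalIntegral_of_contDiff (a b : ℝ) (n : ℕ) :
    ∀ {G : Type u} [NormedAddCommGroup G] [NormedSpace ℝ G] {F : E → ℝ → G},
      ContDiff ℝ n (uncurry F) → ContDiff ℝ n fun x => ∫ s in a..b, F x s := by
  induction n with
  | zero =>
    intro G _ _ F hF
    rw [Nat.cast_zero, contDiff_zero] at hF ⊢
    exact intervalIntegral.continuous_parametric_intervalIntegral_of_continuous' hF a b
  | succ n ih =>
    intro G _ _ F hF
    rw [Nat.cast_succ] at hF ⊢
    have hF1 : ContDiff ℝ 1 (uncurry F) := hF.one_of_succ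
    rw [contDiff_succ_iff_fderiv]
    refine ⟨fun x => (hasFDerivAt_intervalIntegral_of_contDiff hF1 a b x).differentiableAt,
      by simp, ?_⟩
    rw [funext fun x => (hasFDerivAt_intervalIntegral_of_contDiff hF1 a b x).fderiv]
    exact ih hF.uncurry_fderiv_left

end ParametricIntegral

section Hadamard

variable {E F : Type u} [NormedAddCommGroup E] [NormedSpace ℝ E] [NormedAddCommGroup F]
  [NormedSpace ℝ F]

/-- `(g (t • x) - g 0) / t`, written so that it is visibly smooth across `t = 0`. -/
def hadamardQuotient (g : E → F) (t : ℝ) (x : E) : F :=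
  ∫ s in (0 : ℝ)..1, fderiv ℝ g (s • t • x) x

theorem hadamardQuotient_zero [CompleteSpace F] (g : E → F) (x : E) :
    hadamardQuotient g 0 x = fderiv ℝ g 0 x := by
  simp [hadamardQuotient]

theorem smul_hadamardQuotient [CompleteSpace F] {g : E → F} (hg : ContDiff ℝ 1 g) (t : ℝ)
    (x : E) : t • hadamardQuotient g t x = g (t • x) - g 0 := by
  have hderiv : ∀ s ∈ uIcc (0 : ℝ) 1,
      HasDerivAt (fun s : ℝ => g (s • t • x)) (fderiv ℝ g (s • t • x) (t • x)) s := fun s _ =>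
    ((hg.differentiable one_ne_zero _).hasFDerivAt).comp_hasDerivAt s
      (by simpa using (hasDerivAt_id s).smul_const (t • x))
  have hcont : Continuous fun s : ℝ => fderiv ℝ g (s • t • x) (t • x) :=
    ((hg.continuous_fderiv one_ne_zero).comp (continuous_id.smul continuous_const)).clm_apply
      continuous_const
  rw [hadamardQuotient, ← intervalIntegral.integral_smul]
  simp_rw [← map_smul]
  rw [intervalIntegral.integral_eq_sub_of_hasDerivAt hderiv (hcont.intervalIntegrable 0 1)]
  simp

theorem hadamardQuotient_of_ne_zero [CompleteSpace F] {g : E → F} (hg : ContDiff ℝ 1 g) {t : ℝ}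
    (ht : t ≠ 0) (x : E) : hadamardQuotient g t x = t⁻¹ • (g (t • x) - g 0) := by
  rw [← smul_hadamardQuotient hg, inv_smul_smul₀ ht]

theorem contDiff_hadamardQuotient [ProperSpace E] {g : E → F} (hg : ContDiff ℝ ∞ g) :
    ContDiff ℝ ∞ (uncurry (hadamardQuotient g)) := by
  have hint : ContDiff ℝ ∞
      (uncurry fun (p : ℝ × E) (s : ℝ) => fderiv ℝ g (s • p.1 • p.2) p.2) :=
    ((hg.fderiv_right le_rfl).comp (by fun_prop)).clm_apply (by fun_prop)
  exact contDiff_infty.2 fun n =>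
    contDiff_intervalIntegral_of_contDiff 0 1 n (hint.of_le (by exact_mod_cast le_top))

end Hadamard

section Diffeo

variable {m : ℕ}

theorem isDiffeo_of_inverse {f g : Euc m → Euc m} (hf : ContDiff ℝ ∞ f) (hg : ContDiff ℝ ∞ g)
    (hgf : LeftInverse g f) (hfg : RightInverse g f) : IsDiffeo f :=
  ⟨⟨hgf.injective, hfg.surjective⟩, hf,
    invFun_eq_of_injective_of_rightInverse hgf.injective hfg ▸ hg⟩

theorem IsDiffeo.comp {f g : Euc m → Euc m} (hf : IsDiffeo f) (hg : IsDiffeo g) :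
    IsDiffeo (f ∘ g) := by
  obtain ⟨hfb, hfs, hfi⟩ := hf
  obtain ⟨hgb, hgs, hgi⟩ := hg
  refine isDiffeo_of_inverse (hfs.comp hgs) (hgi.comp hfi) (fun x => ?_) (fun y => ?_)
  · simp [leftInverse_invFun hfb.1 _, leftInverse_invFun hgb.1 _]
  · simp [invFun_eq (hgb.2 _), invFun_eq (hfb.2 _)]

theorem isDiffeo_smul_add_const {a : ℝ} (ha : a ≠ 0) (c : Euc m) :
    IsDiffeo fun x : Euc m => a • x + c :=
  isDiffeo_of_inverse (by fun_prop) (g := fun y => a⁻¹ • (y - c)) (by fun_prop)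
    (fun x => by simp [inv_smul_smul₀ ha]) (fun y => by simp [smul_inv_smul₀ ha])

theorem isDiffeo_of_isUnit {L : Euc m →L[ℝ] Euc m} (hL : IsUnit L) : IsDiffeo L := by
  obtain ⟨u, rfl⟩ := hL
  let e := ContinuousLinearEquiv.unitsEquiv ℝ (Euc m) u
  exact isDiffeo_of_inverse e.contDiff e.symm.contDiff e.symm_apply_apply e.apply_symm_apply

theorem isDiffeo_hadamardQuotient {g : Euc m → Euc m} (hg : IsDiffeo g)
    (hg0 : IsUnit (fderiv ℝ g 0)) (t : ℝ) : IsDiffeo (hadamardQuotient g t) := by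
  rcases eq_or_ne t 0 with rfl | ht
  · rw [funext (hadamardQuotient_zero g)]
    exact isDiffeo_of_isUnit hg0
  · have hscale : hadamardQuotient g t =
        (fun y => t⁻¹ • y + -(t⁻¹ • g 0)) ∘ g ∘ fun x => t • x + 0 := by
      funext x
      simp [hadamardQuotient_of_ne_zero (hg.2.1.of_le (by exact_mod_cast le_top)) ht,
        sub_eq_add_neg]
    rw [hscale]
    exact (isDiffeo_smul_add_const (inv_ne_zero ht) _).comp
      (hg.comp (isDiffeo_smul_add_const ht 0))

end Diffeo

/-- Every orientation-preserving diffeomorphism `h` of `ℝᵐ` (a diffeomorphism whose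
differential has positive determinant at every point) is smoothly isotopic to the
identity through diffeomorphisms: there is a map `H`, smooth on `[0,1] × ℝᵐ`, with
`H(0,·) = h`, `H(1,·) = id`, and `H(t,·)` a diffeomorphism for every `t ∈ [0,1]`. -/
theorem orientation_preserving_diffeo_isotopic_to_id (m : ℕ) (h : Euc m → Euc m)
    (hdiffeo : IsDiffeo h)
    (hor : ∀ x, 0 < (fderiv ℝ h x).det) :
    ∃ H : ℝ → Euc m → Euc m,
      ContDiffOn ℝ (⊤ : ℕ∞) (fun p : ℝ × Euc m => H p.1 p.2)
        (Set.Icc (0 : ℝ) 1 ×ˢ Set.univ) ∧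
      H 0 = h ∧ H 1 = id ∧
      ∀ t ∈ Set.Icc (0 : ℝ) 1, IsDiffeo (H t) := by
  have hD : IsUnit (fderiv ℝ h 0) := (ContinuousLinearMap.isUnit_iff_isUnit_det _).2
    (hor 0).ne'.isUnit
  let e := ContinuousLinearEquiv.unitsEquiv ℝ (Euc m) hD.unit
  obtain ⟨γ, hγ, hγ0, hγ1, hγu⟩ :=
    ContinuousLinearMap.smoothlyJoinedToOne_of_det_pos (L := (e.symm : Euc m →L[ℝ] Euc m))
      (by rw [ContinuousLinearEquiv.det_coe_symm]; exact inv_pos.2 (hor 0))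
  have hsmooth := hdiffeo.2.1
  have hpath : ContDiff ℝ ∞ fun p : ℝ × Euc m => γ (1 - p.1) :=
    hγ.comp (f := fun p : ℝ × Euc m => 1 - p.1) (by fun_prop)
  have hquot : ContDiff ℝ ∞ fun p : ℝ × Euc m => hadamardQuotient h (1 - p.1) p.2 :=
    (contDiff_hadamardQuotient hsmooth).comp (f := fun p : ℝ × Euc m => (1 - p.1, p.2)) (by fun_prop)
  refine ⟨fun t x => γ (1 - t) (hadamardQuotient h (1 - t) x) + (1 - t) • h 0,
    ((hpath.clm_apply hquot).add (by fun_prop)).contDiffOn, ?_, ?_, fun t ht => ?_⟩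
  · funext x
    simp [hγ1, hadamardQuotient_of_ne_zero (hsmooth.of_le (by exact_mod_cast le_top)) one_ne_zero]
  · funext x
    simp only [hγ0, hadamardQuotient_zero, sub_self, zero_smul, add_zero, id]
    exact e.symm_apply_apply x
  · have hγt : IsUnit (γ (1 - t)) := hγu _ ⟨by linarith [ht.2], by linarith [ht.1]⟩
    simpa [comp_def] using (isDiffeo_smul_add_const one_ne_zero ((1 - t) • h 0)).comp
      ((isDiffeo_of_isUnit hγt).comp (isDiffeo_hadamardQuotient hdiffeo hD (1 - t)))
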